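/- Let $K$ be a discrete valuation field with residue characteristic $p > 0$, $t \ge 1$, $r \ge 1$. The truncated exponential homomorphism $E \colon \mathfrak{m}_K^t/\mathfrak{m}_K^{pt} \otimes_{O_K} \Omega^r_{O_K}(\log) \to U^t K_{r+1}^M(K)/U^{pt} K_{r+1}^M(K)$ kills the image of the exterior derivative $d \colon \mathfrak{m}_K^t/\mathfrak{m}_K^{pt} \otimes_{O_K} \Omega^{r-1}_{O_K}(\log) \to \mathfrak{m}_K^t/\mathfrak{m}_K^{pt} \otimes_{O_K} \Omega^r_{O_K}(\log)$. -/

import Mathlib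

noncomputable section
open Finsupp Sum

/-! Log differential forms `Ω¹_A(log)` for a subring `A` of a field `K`:
generators `d x` (`x ∈ A`) and `dlog u` (`u ∈ Kˣ`), with relations
`d(x+y) = dx + dy`, `d(xy) = x dy + y dx`, `dlog(uv) = dlog u + dlog v`,
and `dx = x · dlog x` for `x ∈ A ∖ {0}` (with image the unit `u` of `K`). -/

/-- The submodule of relations defining the module of log differentials. -/
def LogDiffRels (A : Type*) [CommRing A] (K : Type*) [Field K] [Algebra A K] :
    Submodule A ((A ⊕ Kˣ) →₀ A) :=
  Submodule.span A
    ({f | ∃ x y : A, f = single (inl (x + y)) 1 - single (inl x) 1 - single (inl y) 1} ∪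
     {f | ∃ x y : A, f = single (inl (x * y)) 1 - x • single (inl y) 1 - y • single (inl x) 1} ∪
     {f | ∃ x y : Kˣ, f = single (inr (x * y)) 1 - single (inr x) 1 - single (inr y) 1} ∪
     {f | ∃ (x : A) (u : Kˣ), algebraMap A K x = (u : K) ∧
        f = single (inl x) 1 - x • single (inr u) 1})

/-- The module `Ω¹_A(log)` of log differentials. -/
abbrev LogDiff (A : Type*) [CommRing A] (K : Type*) [Field K] [Algebra A K] :=
  ((A ⊕ Kˣ) →₀ A) ⧸ LogDiffRels A K

/-- `d x ∈ Ω¹_A(log)` for `x ∈ A`. -/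
def logD {A : Type*} [CommRing A] {K : Type*} [Field K] [Algebra A K] (x : A) :
    LogDiff A K :=
  Submodule.Quotient.mk (single (inl x) 1)

/-- `dlog u ∈ Ω¹_A(log)` for `u ∈ Kˣ`. -/
def logDlog {A : Type*} [CommRing A] {K : Type*} [Field K] [Algebra A K] (u : Kˣ) :
    LogDiff A K :=
  Submodule.Quotient.mk (single (inr u) 1)

/-- The wedge `v 0 ∧ ⋯ ∧ v (n-1)` as an element of the `n`-th exterior power. -/
def wedge {R : Type*} [CommRing R] {M : Type*} [AddCommGroup M] [Module R M]
    (n : ℕ) (v : Fin n → M) : ⋀[R]^n M :=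
  ⟨ExteriorAlgebra.ιMulti R n v, ExteriorAlgebra.ιMulti_range R n (Set.mem_range_self _)⟩

/-! Milnor K-theory `K^M_n(K)`: the quotient of the free abelian group on symbols
`{v 0, …, v (n-1)}` (`v i ∈ Kˣ`) by multilinearity and the Steinberg relations. -/

/-- Relations defining Milnor K-theory. -/
def MilnorRels (K : Type*) [Field K] (n : ℕ) : AddSubgroup ((Fin n → Kˣ) →₀ ℤ) :=
  AddSubgroup.closure
    ({f | ∃ (v : Fin n → Kˣ) (i : Fin n) (y z : Kˣ),
        f = single (Function.update v i (y * z)) 1 - single (Function.update v i y) 1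
              - single (Function.update v i z) 1} ∪
     {f | ∃ v : Fin n → Kˣ, (∃ i j : Fin n, i ≠ j ∧ (v i : K) + (v j : K) = 1) ∧
        f = single v 1})

/-- The `n`-th Milnor K-group of the field `K`. -/
abbrev MilnorK (K : Type*) [Field K] (n : ℕ) :=
  ((Fin n → Kˣ) →₀ ℤ) ⧸ MilnorRels K n

/-- The Milnor symbol `{v 0, …, v (n-1)}`. -/
def MilnorSym (K : Type*) [Field K] (n : ℕ) (v : Fin n → Kˣ) : MilnorK K n :=
  QuotientAddGroup.mk (single v 1)

/-- The unit filtration `U^i K^M_{n+1}(K)`: the subgroup generated by symbols whose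
first entry is a unit of `O` congruent to `1` mod `𝔪^i`. -/
def UFilMilnor (O : Type*) [CommRing O] [IsLocalRing O]
    (K : Type*) [Field K] [Algebra O K] (n i : ℕ) : AddSubgroup (MilnorK K (n + 1)) :=
  AddSubgroup.closure
    {w | ∃ (v : Fin (n + 1) → Kˣ) (x : O),
      x - 1 ∈ (IsLocalRing.maximalIdeal O) ^ i ∧ algebraMap O K x = (v 0 : K) ∧
      w = MilnorSym K (n + 1) v}

/-- The truncated exponential `E(x) = ∑_{i<p} x^i / i!` evaluated in a ring in which
the factorials `i!` (`i < p`) are invertible. -/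
def truncE (p : ℕ) {O : Type*} [CommRing O] (x : O) : O :=
  ∑ i ∈ Finset.range p, Ring.inverse ((i.factorial : O)) * x ^ i

end

/-!
Multiplying the coefficient by `x` turns `h ⊗ x·dlog(hx) ∧ dlog y` into `hx ⊗ dlog(hx) ∧ dlog y`,
which `E` sends to the symbol `{E(a), a, y}` with `a = hx ∈ 𝔪^t`. Over `ℤ`, `(p-1)!·E(T)` agrees
with `(p-1)!·∏_{0<j<p} (1 - T^j)^{n_j}` modulo `p^{pt}` and `T^p` for suitable `n_j ∈ ℕ`, chosen one
degree at a time using that `(p-1)!` is prime to `p`; hence `E(a) ≡ ∏ (1 - a^j)^{n_j}` modulo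
`1 + 𝔪^{pt}`. Each `{1 - a^j, a, y}` is killed by `j`, because `{1 - a^j, a^j} = 0`, and its
`p^{pt}`-th multiple lies in `U^{pt}`, because `(1 - a^j)^{p^s} ≡ 1 mod 𝔪^{s+1}`; so it lies in `U^{pt}`.
-/

namespace IsLocalRing

variable {O : Type*} [CommRing O] [IsLocalRing O]

theorem isUnit_of_sub_one_mem_maximalIdeal {x : O} (hx : x - 1 ∈ maximalIdeal O) :
    IsUnit x := by
  rw [← residue_eq_zero_iff, map_sub, map_one, sub_eq_zero] at hx
  simp [← residue_ne_zero_iff_isUnit, hx]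

variable (p : ℕ) [CharP (ResidueField O) p]

theorem natCast_mem_maximalIdeal_iff (n : ℕ) : (n : O) ∈ maximalIdeal O ↔ p ∣ n := by
  rw [← residue_eq_zero_iff, map_natCast, CharP.cast_eq_zero_iff _ p]

theorem isUnit_natCast_iff (n : ℕ) : IsUnit (n : O) ↔ ¬ p ∣ n := by
  rw [← natCast_mem_maximalIdeal_iff (O := O) p, mem_maximalIdeal, mem_nonunits_iff, not_not]

theorem pow_char_sub_one_mem {c : O} {s : ℕ} (hc : c - 1 ∈ maximalIdeal O ^ (s + 1)) :
    c ^ p - 1 ∈ maximalIdeal O ^ (s + 2) := by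
  have hc₁ : residue O c = 1 := by
    rw [← sub_eq_zero, ← map_one (residue O), ← map_sub, residue_eq_zero_iff]
    exact Ideal.pow_le_self s.succ_ne_zero hc
  -- `∑ cⁱ ≡ ∑ 1 = p ≡ 0` modulo the maximal ideal
  have hgeom : ∑ i ∈ Finset.range p, c ^ i ∈ maximalIdeal O := by
    rw [← residue_eq_zero_iff, map_sum]
    simp [hc₁]
  rw [← geom_sum_mul, pow_succ']
  exact Ideal.mul_mem_mul hgeom hc

theorem pow_char_pow_sub_one_mem {c : O} (hc : c - 1 ∈ maximalIdeal O) (r : ℕ) :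
    c ^ p ^ r - 1 ∈ maximalIdeal O ^ (r + 1) := by
  induction r with
  | zero => simpa using hc
  | succ r ih => simpa [pow_succ, pow_mul] using pow_char_sub_one_mem p ih

end IsLocalRing

section IntegerPolynomials

open Polynomial Finset

theorem Int.exists_natCast_dvd_add_mul {D P : ℤ} (hDP : IsCoprime D P) (hP : P ≠ 0) (c : ℤ) :
    ∃ ν : ℕ, P ∣ c + D * ν := by
  obtain ⟨α, β, hαβ⟩ := hDP
  refine ⟨(-c * α % P).toNat, ?_⟩
  rw [Int.toNat_of_nonneg (Int.emod_nonneg _ hP), Int.emod_def]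
  exact ⟨c * β - D * (-c * α / P), by linear_combination -c * hαβ⟩

theorem exists_one_sub_pow_eq {A : Type*} [CommRing A] (y : A) (n : ℕ) :
    ∃ r : A, (1 - y) ^ n = 1 - n * y + y ^ 2 * r := by
  induction n with
  | zero => exact ⟨0, by simp⟩
  | succ n ih =>
    obtain ⟨r, hr⟩ := ih
    exact ⟨r * (1 - y) + n, by rw [pow_succ, hr]; push_cast; ring⟩

theorem Polynomial.exists_eq_C_mul_prod_one_sub_X_pow {D P : ℤ} (hDP : IsCoprime D P)
    (hP : P ≠ 0) {f : ℤ[X]} (hf : f.coeff 0 = D) (k : ℕ) :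
    ∃ (n : ℕ → ℕ) (g h : ℤ[X]),
      f = C D * ∏ i ∈ range k, (1 - X ^ (i + 1)) ^ n i + C P * g + X ^ (k + 1) * h := by
  induction k with
  | zero =>
    obtain ⟨h, hh⟩ := X_dvd_sub_C (p := f)
    exact ⟨0, 0, h, by rw [hf] at hh; simp [← hh]⟩
  | succ k ih =>
    obtain ⟨n, g, h, hfQ⟩ := ih
    set Q := ∏ i ∈ range k, (1 - X ^ (i + 1) : ℤ[X]) ^ n i
    obtain ⟨ν, z, hz⟩ := Int.exists_natCast_dvd_add_mul hDP hP (h.coeff 0)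
    obtain ⟨h', hh'⟩ := X_dvd_sub_C (p := h)
    obtain ⟨Q', hQ'⟩ : X ∣ Q - 1 := by
      simpa [Q, coeff_zero_eq_eval_zero, eval_prod] using X_dvd_sub_C (p := Q)
    obtain ⟨R, hR⟩ := exists_one_sub_pow_eq (X ^ (k + 1) : ℤ[X]) ν
    have hprod : ∏ i ∈ range (k + 1), (1 - X ^ (i + 1) : ℤ[X]) ^ Function.update n k ν i
        = Q * (1 - X ^ (k + 1)) ^ ν := by
      rw [prod_range_succ, Function.update_self]
      congr 1
      exact prod_congr rfl fun i hi => by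
        rw [Function.update_of_ne (mem_range.mp hi).ne]
    refine ⟨Function.update n k ν, g + C z * X ^ (k + 1),
      h' + C D * (ν : ℤ[X]) * Q' - C D * Q * X ^ k * R, ?_⟩
    rw [hprod]
    have hzC := congrArg C hz
    simp only [map_add, map_mul, map_natCast] at hzC
    linear_combination hfQ + X ^ (k + 1) * hh' - C D * Q * hR + X ^ (k + 1) * hzC
      + C D * ν * X ^ (k + 1) * hQ'

end IntegerPolynomials

section TruncExp

open Polynomial Finset IsLocalRing Nat

noncomputable def scaledTruncExpPoly (p : ℕ) : ℤ[X] :=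
  ∑ i ∈ range p, C (((p - 1)! / i ! : ℕ) : ℤ) * X ^ i

theorem scaledTruncExpPoly_coeff_zero {p : ℕ} (hp : 0 < p) :
    (scaledTruncExpPoly p).coeff 0 = (p - 1)! := by
  rw [scaledTruncExpPoly, finsetSum_coeff, sum_eq_single_of_mem 0 (mem_range.mpr hp)]
  · simp
  · intro i _ hi
    simp [coeff_X_pow, hi.symm]

variable {O : Type*} [CommRing O] [IsLocalRing O] {p : ℕ}

theorem truncE_sub_one_mem_maximalIdeal (hp : p ≠ 0) {a : O} (ha : a ∈ maximalIdeal O) :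
    truncE p a - 1 ∈ maximalIdeal O := by
  obtain ⟨k, hk⟩ := Nat.exists_eq_succ_of_ne_zero hp
  rw [truncE, hk, sum_range_succ']
  simp only [Nat.factorial_zero, Nat.cast_one, Ring.inverse_one, pow_zero, mul_one,
    add_sub_cancel_right]
  exact Ideal.sum_mem _ fun i _ => Ideal.mul_mem_left _ _ (Ideal.pow_mem_of_mem _ ha _ i.succ_pos)

variable [Fact p.Prime] [CharP (ResidueField O) p]

theorem isUnit_factorial_of_lt {i : ℕ} (hi : i < p) : IsUnit (i ! : O) := by
  rw [isUnit_natCast_iff p, (Fact.out : p.Prime).dvd_factorial]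
  omega

theorem aeval_scaledTruncExpPoly (a : O) :
    aeval a (scaledTruncExpPoly p) = (p - 1)! * truncE p a := by
  rw [scaledTruncExpPoly, truncE, map_sum, mul_sum]
  refine sum_congr rfl fun i hi => ?_
  have hi : i < p := mem_range.mp hi
  have hdvd : i ! ∣ (p - 1)! := Nat.factorial_dvd_factorial (by omega)
  rw [map_mul, aeval_C, map_pow, aeval_X, ← mul_assoc, algebraMap_int_eq, eq_intCast,
    Int.cast_natCast, ← Nat.div_mul_cancel hdvd, Nat.cast_mul,
    Ring.mul_inverse_cancel_right _ _ (isUnit_factorial_of_lt hi), Nat.div_mul_cancel hdvd]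

theorem exists_truncE_sub_prod_mem {t : ℕ} {a : O} (ha : a ∈ maximalIdeal O ^ t) :
    ∃ n : ℕ → ℕ,
      truncE p a - ∏ i ∈ range (p - 1), (1 - a ^ (i + 1)) ^ n i ∈ maximalIdeal O ^ (p * t) := by
  have hp : p.Prime := Fact.out
  have hp2 := hp.two_le
  have hD : IsUnit ((p - 1)! : O) := isUnit_factorial_of_lt (by omega)
  have hcop : IsCoprime ((p - 1)! : ℤ) ((p ^ (p * t) : ℕ) : ℤ) := by
    rw [Nat.isCoprime_iff_coprime]
    refine Nat.Coprime.pow_right _ (Nat.Coprime.symm ?_)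
    rw [hp.coprime_iff_not_dvd, hp.dvd_factorial]
    omega
  obtain ⟨n, g, h, hfac⟩ := exists_eq_C_mul_prod_one_sub_X_pow hcop
    (by exact_mod_cast (pow_pos hp.pos _).ne') (scaledTruncExpPoly_coeff_zero hp.pos) (p - 1)
  refine ⟨n, (Ideal.unit_mul_mem_iff_mem _ hD).mp ?_⟩
  have hval := congrArg (aeval a) hfac
  rw [Nat.sub_add_cancel hp.pos, aeval_scaledTruncExpPoly] at hval
  simp only [map_add, map_mul, map_prod, map_pow, map_sub, map_one, map_natCast, aeval_X]
    at hval
  rw [mul_sub, hval, add_assoc, add_sub_cancel_left, Nat.cast_pow]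
  refine Ideal.add_mem _ (Ideal.mul_mem_right _ _ ?_) (Ideal.mul_mem_right _ _ ?_)
  · exact Ideal.pow_mem_pow ((natCast_mem_maximalIdeal_iff p p).mpr dvd_rfl) _
  · rw [mul_comm, pow_mul]
    exact Ideal.pow_mem_pow ha p

end TruncExp

theorem AddSubgroup.mem_of_nsmul_eq_zero_of_nsmul_mem {G : Type*} [AddCommGroup G]
    (H : AddSubgroup G) {x : G} {m n : ℕ} (hmn : m.Coprime n) (hm : m • x = 0)
    (hn : n • x ∈ H) : x ∈ H := by
  obtain ⟨α, β, hαβ⟩ := Nat.isCoprime_iff_coprime.mpr hmn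
  have hx : x = β • n • x := by
    calc x = (α * m + β * n : ℤ) • x := by rw [hαβ, one_zsmul]
      _ = β • n • x := by
        rw [add_zsmul, mul_zsmul, mul_zsmul, natCast_zsmul, natCast_zsmul, hm, zsmul_zero,
          zero_add]
  exact hx ▸ H.zsmul_mem hn β

section MilnorK

open Function

variable {K : Type*} [Field K] {N : ℕ}

theorem milnorSym_update_mul (v : Fin N → Kˣ) (i : Fin N) (y z : Kˣ) :
    MilnorSym K N (update v i (y * z))
      = MilnorSym K N (update v i y) + MilnorSym K N (update v i z) := by
  rw [MilnorSym, MilnorSym, MilnorSym, ← QuotientAddGroup.mk_add,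
    QuotientAddGroup.eq_iff_sub_mem, sub_add_eq_sub_sub]
  exact AddSubgroup.subset_closure (Set.mem_union_left _ ⟨v, i, y, z, rfl⟩)

theorem milnorSym_eq_zero_of_add_eq_one (v : Fin N → Kˣ) {i j : Fin N} (hij : i ≠ j)
    (h : (v i : K) + v j = 1) : MilnorSym K N v = 0 :=
  (QuotientAddGroup.eq_zero_iff _).mpr
    (AddSubgroup.subset_closure (Set.mem_union_right _ ⟨v, ⟨i, j, hij, h⟩, rfl⟩))

noncomputable def milnorSymUpdateHom (v : Fin N → Kˣ) (i : Fin N) : Additive Kˣ →+ MilnorK K N :=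
  AddMonoidHom.mk' (fun y => MilnorSym K N (update v i y.toMul))
    fun y z => milnorSym_update_mul v i y.toMul z.toMul

theorem milnorSym_update_pow (v : Fin N → Kˣ) (i : Fin N) (y : Kˣ) (k : ℕ) :
    MilnorSym K N (update v i (y ^ k)) = k • MilnorSym K N (update v i y) :=
  (milnorSymUpdateHom v i).map_nsmul k (Additive.ofMul y)

theorem milnorSym_update_prod {ι : Type*} (v : Fin N → Kˣ) (i : Fin N) (s : Finset ι)
    (c : ι → Kˣ) :
    MilnorSym K N (update v i (∏ j ∈ s, c j)) = ∑ j ∈ s, MilnorSym K N (update v i (c j)) :=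
  map_sum (milnorSymUpdateHom v i) (fun j => Additive.ofMul (c j)) s

theorem milnorSym_cons_mul (q : Fin N → Kˣ) (y z : Kˣ) :
    MilnorSym K (N + 1) (Fin.cons (y * z) q)
      = MilnorSym K (N + 1) (Fin.cons y q) + MilnorSym K (N + 1) (Fin.cons z q) := by
  simpa only [Fin.update_cons_zero] using milnorSym_update_mul (Fin.cons 1 q) 0 y z

theorem milnorSym_cons_pow (q : Fin N → Kˣ) (y : Kˣ) (k : ℕ) :
    MilnorSym K (N + 1) (Fin.cons (y ^ k) q) = k • MilnorSym K (N + 1) (Fin.cons y q) := by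
  simpa only [Fin.update_cons_zero] using milnorSym_update_pow (Fin.cons 1 q) 0 y k

theorem milnorSym_cons_prod {ι : Type*} (q : Fin N → Kˣ) (s : Finset ι) (c : ι → Kˣ) :
    MilnorSym K (N + 1) (Fin.cons (∏ j ∈ s, c j) q)
      = ∑ j ∈ s, MilnorSym K (N + 1) (Fin.cons (c j) q) := by
  simpa only [Fin.update_cons_zero] using milnorSym_update_prod (Fin.cons 1 q) 0 s c

theorem milnorSym_cons_cons_pow (b y : Kˣ) (q : Fin N → Kˣ) (k : ℕ) :
    MilnorSym K (N + 2) (Fin.cons b (Fin.cons (y ^ k) q))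
      = k • MilnorSym K (N + 2) (Fin.cons b (Fin.cons y q)) := by
  have hcons (z : Kˣ) : (Fin.cons b (Fin.cons z q) : Fin (N + 2) → Kˣ)
      = update (Fin.cons b (Fin.cons 1 q)) 1 z := by
    ext j
    refine Fin.cases ?_ (Fin.cases ?_ fun j => ?_) j <;>
      simp [Function.update, Fin.succ_succ_ne_one]
  rw [hcons (y ^ k), hcons y, milnorSym_update_pow]

end MilnorK

section UnitFiltration

open IsLocalRing Finset

variable {O : Type*} [CommRing O] [IsLocalRing O] {K : Type*} [Field K] [Algebra O K]

theorem milnorSym_cons_mem_UFilMilnor {n i : ℕ} (c : Oˣ) (hc : (c : O) - 1 ∈ maximalIdeal O ^ i)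
    (q : Fin n → Kˣ) :
    MilnorSym K (n + 1) (Fin.cons (Units.map (algebraMap O K).toMonoidHom c) q)
      ∈ UFilMilnor O K n i :=
  AddSubgroup.subset_closure ⟨_, c, hc, by simp, rfl⟩

variable {p : ℕ} [Fact p.Prime] [CharP (ResidueField O) p]

theorem milnorSym_one_sub_pow_mem_UFilMilnor {m j : ℕ} (hj : ¬ p ∣ j) {a : O}
    (ha : a ∈ maximalIdeal O) (b : Oˣ) (hb : (b : O) = 1 - a ^ j) (u : Kˣ)
    (hu : (u : K) = algebraMap O K a) (y : Fin m → Kˣ) (s : ℕ) :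
    MilnorSym K (m + 2) (Fin.cons (Units.map (algebraMap O K).toMonoidHom b) (Fin.cons u y))
      ∈ UFilMilnor O K (m + 1) s := by
  have hp : p.Prime := Fact.out
  have hj0 : j ≠ 0 := by rintro rfl; exact hj (dvd_zero p)
  refine AddSubgroup.mem_of_nsmul_eq_zero_of_nsmul_mem _
    (Nat.Coprime.pow_right s ((hp.coprime_iff_not_dvd.mpr hj).symm)) ?_ ?_
  · rw [← milnorSym_cons_cons_pow]
    refine milnorSym_eq_zero_of_add_eq_one _ (i := 0) (j := 1) Fin.zero_ne_one ?_
    simp [hb, hu]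
  · rw [← milnorSym_cons_pow, ← map_pow]
    refine milnorSym_cons_mem_UFilMilnor _ (Ideal.pow_le_pow_right s.le_succ ?_) _
    refine pow_char_pow_sub_one_mem p ?_ s
    rw [hb, sub_sub_cancel_left]
    exact neg_mem (Ideal.pow_mem_of_mem _ ha j (Nat.pos_of_ne_zero hj0))

theorem milnorSym_truncE_mem_UFilMilnor {t m : ℕ} (ht : 1 ≤ t) {a : O}
    (ha : a ∈ maximalIdeal O ^ t) (e : Oˣ) (he : (e : O) = truncE p a) (u : Kˣ)
    (hu : (u : K) = algebraMap O K a) (y : Fin m → Kˣ) :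
    MilnorSym K (m + 2) (Fin.cons (Units.map (algebraMap O K).toMonoidHom e) (Fin.cons u y))
      ∈ UFilMilnor O K (m + 1) (p * t) := by
  have hma : a ∈ maximalIdeal O := Ideal.pow_le_self (by omega) ha
  obtain ⟨n, hn⟩ := exists_truncE_sub_prod_mem (p := p) ha
  choose b hb using fun i : ℕ => isUnit_of_sub_one_mem_maximalIdeal (x := 1 - a ^ (i + 1))
    (by simpa using Ideal.pow_mem_of_mem _ hma _ i.succ_pos)
  set Q : Oˣ := ∏ i ∈ range (p - 1), b i ^ n i
  have hQ : (Q : O) = ∏ i ∈ range (p - 1), (1 - a ^ (i + 1)) ^ n i := by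
    simp [Q, hb]
  have hQe : ((Q⁻¹ * e : Oˣ) : O) - 1 ∈ maximalIdeal O ^ (p * t) := by
    have : ((Q⁻¹ * e : Oˣ) : O) - 1 = (Q⁻¹ : Oˣ) * (truncE p a - Q) := by
      rw [Units.val_mul, mul_sub, Units.inv_mul, he]
    rw [this, hQ]
    exact Ideal.mul_mem_left _ _ hn
  rw [← mul_inv_cancel_left Q e, map_mul, milnorSym_cons_mul]
  refine add_mem ?_ (milnorSym_cons_mem_UFilMilnor _ hQe _)
  rw [map_prod, milnorSym_cons_prod]
  refine sum_mem fun i hi => ?_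
  rw [map_pow, milnorSym_cons_pow]
  refine AddSubgroup.nsmul_mem _ ?_ _
  have hip : i + 1 < p := by have := mem_range.mp hi; omega
  exact milnorSym_one_sub_pow_mem_UFilMilnor (Nat.not_dvd_of_pos_of_lt i.succ_pos hip) hma
    (b i) (hb i) u hu y _

end UnitFiltration

theorem wedge_cons_smul {R M : Type*} [CommRing R] [AddCommGroup M] [Module R M] {n : ℕ}
    (r : R) (v : M) (w : Fin n → M) :
    wedge (R := R) (n + 1) (Fin.cons (r • v) w) = r • wedge (n + 1) (Fin.cons v w) := by
  apply Subtype.ext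
  simpa [wedge, Fin.update_cons_zero] using
    (ExteriorAlgebra.ιMulti R (n + 1)).map_update_smul (Fin.cons v w) 0 r v

open TensorProduct in
theorem stmt5_general (p : ℕ) [Fact p.Prime]
    (O : Type*) [CommRing O] [IsDomain O] [IsDiscreteValuationRing O]
    (K : Type*) [Field K] [Algebra O K]
    [CharP (IsLocalRing.ResidueField O) p]
    (t : ℕ) (ht : 1 ≤ t) (m : ℕ)
    (It Ipt : Submodule O O)
    (hIt : It = (IsLocalRing.maximalIdeal O) ^ t)
    (E : (Submodule.map Ipt.mkQ It ⊗[O] (⋀[O]^(m + 1) (LogDiff O K))) →+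
        MilnorK K (m + 1 + 1) ⧸ UFilMilnor O K (m + 1) (p * t))
    (hE : ∀ (x : O) (hxm : x ∈ It) (y : Fin (m + 1) → Kˣ) (uEx : Kˣ),
        (uEx : K) = algebraMap O K (truncE p x) →
        E ((⟨Ipt.mkQ x, Submodule.mem_map_of_mem hxm⟩ : Submodule.map Ipt.mkQ It)
              ⊗ₜ[O] wedge (m + 1) fun j => logDlog (y j))
          = QuotientAddGroup.mk (MilnorSym K (m + 1 + 1) (Fin.cons uEx y)))
    (h x : O) (hhx : h ∈ It) (y : Fin m → Kˣ) (u : Kˣ)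
    (hu : (u : K) = algebraMap O K (h * x)) :
    E ((⟨Ipt.mkQ h, Submodule.mem_map_of_mem hhx⟩ : Submodule.map Ipt.mkQ It)
          ⊗ₜ[O] wedge (m + 1) (Fin.cons (x • logDlog u) fun j => logDlog (y j)))
      = 0 := by
  have hhxIt : h * x ∈ It := Ideal.mul_mem_right x It hhx
  have hhxm : h * x ∈ IsLocalRing.maximalIdeal O ^ t := hIt ▸ hhxIt
  obtain ⟨e, he⟩ := IsLocalRing.isUnit_of_sub_one_mem_maximalIdeal <|
    truncE_sub_one_mem_maximalIdeal (Fact.out : p.Prime).ne_zero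
      (Ideal.pow_le_self (by omega) hhxm)
  have hsmul : x • (⟨Ipt.mkQ h, Submodule.mem_map_of_mem hhx⟩ : Submodule.map Ipt.mkQ It)
      = ⟨Ipt.mkQ (h * x), Submodule.mem_map_of_mem hhxIt⟩ :=
    Subtype.ext <| by rw [Submodule.coe_smul, ← map_smul, smul_eq_mul, mul_comm]
  have hcons : (Fin.cons (logDlog u) fun j => logDlog (y j) : Fin (m + 1) → LogDiff O K)
      = fun j => logDlog ((Fin.cons u y : Fin (m + 1) → Kˣ) j) :=
    (Fin.comp_cons logDlog u y).symm
  rw [wedge_cons_smul, TensorProduct.tmul_smul, TensorProduct.smul_tmul', hsmul,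
    hcons, hE (h * x) hhxIt (Fin.cons u y) (Units.map (algebraMap O K).toMonoidHom e)
      (by simp [he]),
    QuotientAddGroup.eq_zero_iff]
  exact milnorSym_truncE_mem_UFilMilnor ht hhxm e he u hu y

open TensorProduct in
/-- the truncated exponential homomorphism
`E : 𝔪^t/𝔪^{pt} ⊗_O Ω^r_O(log) → U^t K^M_{r+1}(K)/U^{pt} K^M_{r+1}(K)` (here `r = m+1 ≥ 1`,
characterized by `x ⊗ dlog y₁ ∧ ⋯ ∧ dlog y_r ↦ {E(x), y₁, …, y_r}`) kills the image of
the exterior derivative `d : 𝔪^t/𝔪^{pt} ⊗ Ω^{r-1} → 𝔪^t/𝔪^{pt} ⊗ Ω^r`, whose image is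
generated by the classes of `h ⊗ d(hx) ∧ dlog y₁ ∧ ⋯ ∧ dlog y_{r-1}
= h ⊗ (x · dlog(hx)) ∧ dlog y₁ ∧ ⋯ ∧ dlog y_{r-1}` for `h` generating `𝔪^t`. -/
theorem stmt5 (p : ℕ) [Fact p.Prime]
    (O : Type*) [CommRing O] [IsDomain O] [IsDiscreteValuationRing O]
    (K : Type*) [Field K] [Algebra O K] [IsFractionRing O K]
    [CharP (IsLocalRing.ResidueField O) p]
    (t : ℕ) (ht : 1 ≤ t) (m : ℕ)
    (It Ipt : Submodule O O)
    (hIt : It = (IsLocalRing.maximalIdeal O) ^ t)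
    (hIpt : Ipt = (IsLocalRing.maximalIdeal O) ^ (p * t))
    (E : (Submodule.map Ipt.mkQ It ⊗[O] (⋀[O]^(m + 1) (LogDiff O K))) →+
        MilnorK K (m + 1 + 1) ⧸ UFilMilnor O K (m + 1) (p * t))
    (hE : ∀ (x : O) (hxm : x ∈ It) (y : Fin (m + 1) → Kˣ) (uEx : Kˣ),
        (uEx : K) = algebraMap O K (truncE p x) →
        E ((⟨Ipt.mkQ x, Submodule.mem_map_of_mem hxm⟩ : Submodule.map Ipt.mkQ It)
              ⊗ₜ[O] wedge (m + 1) fun j => logDlog (y j))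
          = QuotientAddGroup.mk (MilnorSym K (m + 1 + 1) (Fin.cons uEx y)))
    (h x : O) (hh : Ideal.span {h} = (IsLocalRing.maximalIdeal O) ^ t)
    (hhx : h ∈ It) (y : Fin m → Kˣ) (u : Kˣ)
    (hu : (u : K) = algebraMap O K (h * x)) :
    E ((⟨Ipt.mkQ h, Submodule.mem_map_of_mem hhx⟩ : Submodule.map Ipt.mkQ It)
          ⊗ₜ[O] wedge (m + 1) (Fin.cons (x • logDlog u) fun j => logDlog (y j)))
      = 0 :=
  stmt5_general p O K t ht m It Ipt hIt E hE h x hhx y u hu
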